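/- A set S ⊆ {1,…,C} admits a feasible assignment if and only if |S ∩ {1,…,i}| ≤ V(i) for every i ∈ {1,…,C}. -/
import Mathlib


/-- Cumulative bandwidth of a link up to time `t`: `R(t) = Σ_{j=1}^t B(j)`. -/
noncomputable def cumBW (B : ℕ → ℝ) (t : ℕ) : ℝ := ∑ j ∈ Finset.Icc 1 t, B j

/-- `V(i) = Σ_{u=1}^U ⌊min(η_u, R_u(d(i)))/Y⌋`. -/
lemma cumBW_nonneg {B : ℕ → ℝ} (hB : ∀ j, 1 ≤ j → 0 ≤ B j) (t : ℕ) : 0 ≤ cumBW B t :=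
  Finset.sum_nonneg fun j hj => hB j (Finset.mem_Icc.mp hj).1

lemma cumBW_mono {B : ℕ → ℝ} (hB : ∀ j, 1 ≤ j → 0 ≤ B j) : Monotone (cumBW B) := by
  intro a b hab
  exact Finset.sum_le_sum_of_subset_of_nonneg (Finset.Icc_subset_Icc_right hab)
    (fun j hj _ => hB j (Finset.mem_Icc.mp hj).1)

lemma cumBW_succ (B : ℕ → ℝ) (j : ℕ) (hj : 1 ≤ j) : cumBW B j = cumBW B (j-1) + B j := by
  obtain ⟨t, rfl⟩ := Nat.exists_eq_add_of_le hj
  simp only [cumBW, Nat.add_sub_cancel_left, Nat.add_comm 1 t]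
  rw [Finset.sum_Icc_succ_top (by omega)]
  simp

lemma cumBW_zero (B : ℕ → ℝ) : cumBW B 0 = 0 := by simp [cumBW]

lemma telescope_Icc (f : ℕ → ℝ) (t : ℕ) :
    ∑ j ∈ Finset.Icc 1 t, (f j - f (j-1)) = f t - f 0 := by
  have : Finset.Icc 1 t = Finset.Ico 1 (t+1) := by rw [Finset.Ico_add_one_right_eq_Icc]
  rw [this, Finset.sum_Ico_eq_sum_range]
  have h : ∀ i ∈ Finset.range (t + 1 - 1), f (1 + i) - f (1 + i - 1) = f (i+1) - f i := by
    intro i _; congr 2 <;> omega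
  rw [Finset.sum_congr rfl h]
  have := Finset.sum_range_sub f t
  simpa using this

/-- elementary clamp function -/
noncomputable def gg (Y : ℝ) (p : ℕ) (x : ℝ) : ℝ := min x ((p+1)*Y) - min x (p*Y)

lemma gg_mono {Y : ℝ} (hY : 0 ≤ Y) (p : ℕ) {a b : ℝ} (hab : a ≤ b) :
    gg Y p a ≤ gg Y p b := by
  unfold gg
  have hc : (p:ℝ)*Y ≤ (p+1)*Y := by nlinarith
  rcases min_cases a ((p+1)*Y) with ⟨h1,h2⟩|⟨h1,h2⟩ <;>
  rcases min_cases a ((p:ℝ)*Y) with ⟨h3,h4⟩|⟨h3,h4⟩ <;>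
  rcases min_cases b ((p+1)*Y) with ⟨h5,h6⟩|⟨h5,h6⟩ <;>
  rcases min_cases b ((p:ℝ)*Y) with ⟨h7,h8⟩|⟨h7,h8⟩ <;> linarith

lemma gg_nonneg {Y : ℝ} (hY : 0 ≤ Y) (p : ℕ) (x : ℝ) : 0 ≤ gg Y p x := by
  unfold gg
  have hc : (p:ℝ)*Y ≤ (p+1)*Y := by nlinarith
  have := min_le_min (le_refl x) hc
  linarith

lemma gg_zero {Y : ℝ} (hY : 0 ≤ Y) (p : ℕ) : gg Y p 0 = 0 := by
  unfold gg
  have h1 : (0:ℝ) ≤ (p:ℝ)*Y := by positivity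
  have h2 : (0:ℝ) ≤ ((p:ℝ)+1)*Y := by positivity
  rw [min_eq_left h1, min_eq_left h2]
  ring

lemma gg_eq_Y {Y : ℝ} (hY : 0 ≤ Y) {p : ℕ} {x : ℝ} (hx : ((p:ℝ)+1)*Y ≤ x) :
    gg Y p x = Y := by
  unfold gg
  have hc : (p:ℝ)*Y ≤ (p+1)*Y := by nlinarith
  rw [min_eq_right hx, min_eq_right (le_trans hc hx)]
  ring

lemma sum_gg {Y : ℝ} (N : ℕ) {x : ℝ} (hx : 0 ≤ x) :
    ∑ p ∈ Finset.range N, gg Y p x = min x (N*Y) := by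
  unfold gg
  have := Finset.sum_range_sub (fun p : ℕ => min x ((p:ℕ)*Y)) N
  simp only [Nat.cast_zero, zero_mul, min_eq_right hx] at this
  calc ∑ p ∈ Finset.range N, (min x (((p:ℝ)+1)*Y) - min x ((p:ℝ)*Y))
      = ∑ p ∈ Finset.range N, (min x (((p+1:ℕ):ℝ)*Y) - min x (((p:ℕ):ℝ)*Y)) := by
        apply Finset.sum_congr rfl; intro p _; push_cast; ring_nf
    _ = min x (N*Y) - min x 0 := by rw [this]; simp [min_eq_right hx]
    _ = min x (N*Y) := by simp [min_eq_right hx]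

lemma min_sub_min_le {a b c : ℝ} (hab : b ≤ a) : min a c - min b c ≤ a - b := by
  rcases min_cases a c with ⟨h1,h2⟩|⟨h1,h2⟩ <;>
  rcases min_cases b c with ⟨h3,h4⟩|⟨h3,h4⟩ <;> linarith

lemma exists_greedy {U : ℕ} (hU : 0 < U) (n : Fin U → ℕ → ℕ) (hn : ∀ u, Monotone (n u))
    (S : Finset ℕ) :
    (∀ k ∈ S, (S.filter (fun x => x ≤ k)).card ≤ ∑ u : Fin U, n u k) →
    ∃ ℓ : ℕ → Fin U, ∀ i u, (S.filter (fun k => k ≤ i ∧ ℓ k = u)).card ≤ n u i := by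
  classical
  induction S using Finset.strongInduction with
  | _ S IH =>
    intro hH
    rcases S.eq_empty_or_nonempty with rfl | hne
    · exact ⟨fun _ => ⟨0, hU⟩, by simp⟩
    · set m := S.max' hne with hm_def
      have hm : m ∈ S := S.max'_mem hne
      set S' := S.erase m with hS'
      have hsub : S' ⊂ S := Finset.erase_ssubset hm
      obtain ⟨ℓ', hℓ'⟩ := IH S' hsub (by
        intro k hk
        refine le_trans (Finset.card_le_card ?_) (hH k (Finset.mem_of_mem_erase hk))
        exact Finset.filter_subset_filter _ (Finset.erase_subset _ _))
      have hallS : ∀ k ∈ S, k ≤ m := fun k hk => S.le_max' k hk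
      have hfib : ∑ u : Fin U, (S'.filter (fun k => ℓ' k = u)).card = S'.card :=
        (Finset.card_eq_sum_card_fiberwise (fun x _ => Finset.mem_univ (ℓ' x))).symm
      have hScard : (S.filter (fun x => x ≤ m)).card = S.card := by
        congr 1
        exact Finset.filter_true_of_mem (fun k hk => hallS k hk)
      have hlt : ∑ u : Fin U, (S'.filter (fun k => ℓ' k = u)).card < ∑ u : Fin U, n u m := by
        rw [hfib]
        have h1 : S'.card < S.card := Finset.card_erase_lt_of_mem hm
        have h2 := hH m hm
        rw [hScard] at h2
        omega
      obtain ⟨u₀, -, hu₀⟩ := Finset.exists_lt_of_sum_lt hlt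
      refine ⟨Function.update ℓ' m u₀, ?_⟩
      intro i u
      have hupd : ∀ k ∈ S', Function.update ℓ' m u₀ k = ℓ' k := by
        intro k hk
        exact Function.update_of_ne (Finset.ne_of_mem_erase hk) _ _
      by_cases hcase : m ≤ i ∧ u = u₀
      · obtain ⟨hmi, hu⟩ := hcase
        have hset : S.filter (fun k => k ≤ i ∧ Function.update ℓ' m u₀ k = u)
            = insert m (S'.filter (fun k => k ≤ i ∧ ℓ' k = u)) := by
          ext k
          simp only [Finset.mem_filter, Finset.mem_insert, hS', Finset.mem_erase]
          by_cases hk : k = m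
          · subst hk
            simp [Function.update_self, hm, hmi, hu.symm]
          · simp only [hk, Function.update_of_ne hk, false_or]
            tauto
        rw [hset, Finset.card_insert_of_notMem (by
          simp only [Finset.mem_filter, hS', Finset.mem_erase]
          tauto)]
        have hsub2 : S'.filter (fun k => k ≤ i ∧ ℓ' k = u) ⊆ S'.filter (fun k => ℓ' k = u₀) := by
          intro k hk
          simp only [Finset.mem_filter] at hk ⊢
          exact ⟨hk.1, hu ▸ hk.2.2⟩
        have := Finset.card_le_card hsub2
        have hmono := hn u₀ hmi
        subst hu
        omega
      · have hsub3 : S.filter (fun k => k ≤ i ∧ Function.update ℓ' m u₀ k = u)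
            ⊆ S'.filter (fun k => k ≤ i ∧ ℓ' k = u) := by
          intro k hk
          simp only [Finset.mem_filter] at hk
          have hkm : k ≠ m := by
            rintro rfl
            rw [Function.update_self] at hk
            exact hcase ⟨hk.2.1, hk.2.2.symm⟩
          simp only [Finset.mem_filter, hS', Finset.mem_erase]
          rw [Function.update_of_ne hkm] at hk
          exact ⟨⟨hkm, hk.1⟩, hk.2⟩
        exact le_trans (Finset.card_le_card hsub3) (hℓ' i u)

noncomputable def Vval (U : ℕ) (Y : ℝ) (d : ℕ → ℕ) (B : Fin U → ℕ → ℝ)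
    (η : Fin U → ℝ) (i : ℕ) : ℕ :=
  ∑ u : Fin U, ⌊min (η u) (cumBW (B u) (d i)) / Y⌋₊

/-- A feasible assignment for a set `S` of chunks: a link choice `ℓ i` and download
amounts `z i j ≥ 0` so that each chunk `i ∈ S` gets its full layer of size `Y` over
link `ℓ i` by its deadline `d i`, respecting per-slot bandwidths and per-link
maximum contributions. -/
def FeasibleAssignment (U : ℕ) (Y : ℝ) (d : ℕ → ℕ) (B : Fin U → ℕ → ℝ)
    (η : Fin U → ℝ) (S : Finset ℕ) : Prop :=
  ∃ (ℓ : ℕ → Fin U) (z : ℕ → ℕ → ℝ),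
    (∀ i ∈ S, ∀ j, 0 ≤ z i j) ∧
    (∀ i ∈ S, ∑ j ∈ Finset.Icc 1 (d i), z i j = Y) ∧
    (∀ i ∈ S, ∀ j, (j < 1 ∨ d i < j) → z i j = 0) ∧
    (∀ u : Fin U, ∀ j, 1 ≤ j →
      ∑ i ∈ S.filter (fun i => ℓ i = u), z i j ≤ B u j) ∧
    (∀ u : Fin U,
      ∑ i ∈ S.filter (fun i => ℓ i = u), ∑ j ∈ Finset.Icc 1 (d i), z i j ≤ η u)

/-- A set `S ⊆ {1,…,C}` admits a feasible assignment iff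
`|S ∩ {1,…,i}| ≤ V(i)` for every `i ∈ {1,…,C}`. -/
theorem feasible_iff_prefix_le_V
    (C U : ℕ) (hU : 1 ≤ U) (Y : ℝ) (hY : 0 < Y)
    (d : ℕ → ℕ) (hd : Monotone d)
    (B : Fin U → ℕ → ℝ) (hB : ∀ u j, 1 ≤ j → 0 ≤ B u j)
    (η : Fin U → ℝ) (hη : ∀ u, 0 ≤ η u)
    (S : Finset ℕ) (hS : S ⊆ Finset.Icc 1 C) :
    FeasibleAssignment U Y d B η S ↔
      ∀ i ∈ Finset.Icc 1 C,
        (S.filter (fun k => k ≤ i)).card ≤ Vval U Y d B η i := by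
  classical
  constructor
  · rintro ⟨ℓ, z, hz0, hfull, hzero, hslot, hcap⟩
    intro i _
    have hcardsum : (S.filter (fun k => k ≤ i)).card
        = ∑ u : Fin U, ((S.filter (fun k => k ≤ i)).filter (fun k => ℓ k = u)).card :=
      Finset.card_eq_sum_card_fiberwise (fun x _ => Finset.mem_univ (ℓ x))
    rw [hcardsum, Vval]
    apply Finset.sum_le_sum
    intro u _
    set T := (S.filter (fun k => k ≤ i)).filter (fun k => ℓ k = u) with hT
    have hTS : ∀ k ∈ T, k ∈ S := by
      intro k hk
      simp only [hT, Finset.mem_filter] at hk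
      exact hk.1.1
    have hTle : ∀ k ∈ T, k ≤ i := by
      intro k hk
      simp only [hT, Finset.mem_filter] at hk
      exact hk.1.2
    have hTF : T ⊆ S.filter (fun k => ℓ k = u) := by
      intro k hk
      simp only [hT, Finset.mem_filter] at hk ⊢
      exact ⟨hk.1.1, hk.2⟩
    -- total on T
    have htot : (T.card : ℝ) * Y = ∑ k ∈ T, ∑ j ∈ Finset.Icc 1 (d k), z k j := by
      rw [Finset.sum_congr rfl (fun k hk => hfull k (hTS k hk))]
      simp [mul_comm]
    apply Nat.le_floor
    rw [le_div_iff₀ hY]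
    rw [htot]
    apply le_min
    · -- ≤ η u
      refine le_trans (Finset.sum_le_sum_of_subset_of_nonneg hTF ?_) (hcap u)
      intro k hk _
      exact Finset.sum_nonneg fun j _ => hz0 k (Finset.mem_filter.mp hk).1 j
    · -- ≤ cumBW (B u) (d i)
      have hstep : ∀ k ∈ T, ∑ j ∈ Finset.Icc 1 (d k), z k j
          = ∑ j ∈ Finset.Icc 1 (d i), z k j := by
        intro k hk
        apply Finset.sum_subset (Finset.Icc_subset_Icc_right (hd (hTle k hk)))
        intro j hj hj'
        simp only [Finset.mem_Icc, not_and, not_le] at hj hj'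
        exact hzero k (hTS k hk) j (Or.inr (hj' hj.1))
      rw [Finset.sum_congr rfl hstep, Finset.sum_comm]
      unfold cumBW
      apply Finset.sum_le_sum
      intro j hj
      refine le_trans ?_ (hslot u j (Finset.mem_Icc.mp hj).1)
      apply Finset.sum_le_sum_of_subset_of_nonneg hTF
      intro k hk _
      exact hz0 k (Finset.mem_filter.mp hk).1 j
  · intro h
    classical
    set nf : Fin U → ℕ → ℕ := fun u i => ⌊min (η u) (cumBW (B u) (d i)) / Y⌋₊ with hnf
    have hmin_nonneg : ∀ u i, 0 ≤ min (η u) (cumBW (B u) (d i)) := fun u i =>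
      le_min (hη u) (cumBW_nonneg (hB u) (d i))
    have hnmono : ∀ u, Monotone (nf u) := by
      intro u a b hab
      apply Nat.floor_le_floor
      have hc : cumBW (B u) (d a) ≤ cumBW (B u) (d b) := cumBW_mono (hB u) (hd hab)
      gcongr
    have hH : ∀ k ∈ S, (S.filter (fun x => x ≤ k)).card ≤ ∑ u : Fin U, nf u k := by
      intro k hk
      exact h k (hS hk)
    obtain ⟨ℓ, hinv⟩ := exists_greedy hU nf hnmono S hH
    -- rank
    set r : ℕ → ℕ := fun i => (S.filter (fun k => k < i ∧ ℓ k = ℓ i)).card with hr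
    set z : ℕ → ℕ → ℝ := fun i j =>
      gg Y (r i) (cumBW (B (ℓ i)) j) - gg Y (r i) (cumBW (B (ℓ i)) (j-1)) with hz
    -- key rank bound
    have hrank : ∀ i ∈ S, r i + 1 ≤ nf (ℓ i) i := by
      intro i hi
      have hset : S.filter (fun k => k ≤ i ∧ ℓ k = ℓ i)
          = insert i (S.filter (fun k => k < i ∧ ℓ k = ℓ i)) := by
        ext k
        simp only [Finset.mem_filter, Finset.mem_insert]
        constructor
        · rintro ⟨hkS, hki, hlk⟩
          rcases lt_or_eq_of_le hki with h' | h'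
          · exact Or.inr ⟨hkS, h', hlk⟩
          · exact Or.inl h'
        · rintro (rfl | ⟨hkS, hki, hlk⟩)
          · exact ⟨hi, le_refl _, rfl⟩
          · exact ⟨hkS, le_of_lt hki, hlk⟩
      have := hinv i (ℓ i)
      rw [hset, Finset.card_insert_of_notMem (by
        simp only [Finset.mem_filter]
        rintro ⟨-, hlt, -⟩; omega)] at this
      simp only [hr]
      omega
    have hkey : ∀ i ∈ S, ((r i : ℝ) + 1) * Y ≤ min (η (ℓ i)) (cumBW (B (ℓ i)) (d i)) := by
      intro i hi
      have h1 : ((r i + 1 : ℕ) : ℝ) ≤ min (η (ℓ i)) (cumBW (B (ℓ i)) (d i)) / Y := by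
        refine le_trans (Nat.cast_le.mpr (hrank i hi)) ?_
        exact Nat.floor_le (div_nonneg (hmin_nonneg (ℓ i) i) hY.le)
      rw [le_div_iff₀ hY] at h1
      push_cast at h1
      linarith
    refine ⟨ℓ, z, ?_, ?_, ?_, ?_, ?_⟩
    · -- nonneg
      intro i _ j
      simp only [hz]
      have := gg_mono (le_of_lt hY) (r i)
        (cumBW_mono (hB (ℓ i)) (Nat.sub_le j 1))
      linarith
    · -- full
      intro i hi
      simp only [hz]
      rw [telescope_Icc]
      rw [cumBW_zero, gg_zero (le_of_lt hY)]
      rw [gg_eq_Y (le_of_lt hY) (le_trans (hkey i hi) (min_le_right _ _))]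
      ring
    · -- zero outside window
      intro i hi j hj
      rcases hj with hj | hj
      · interval_cases j
        simp only [hz, Nat.zero_sub, sub_self]
      · simp only [hz]
        have h1 : cumBW (B (ℓ i)) (d i) ≤ cumBW (B (ℓ i)) (j - 1) :=
          cumBW_mono (hB (ℓ i)) (by omega)
        have h2 : cumBW (B (ℓ i)) (d i) ≤ cumBW (B (ℓ i)) j :=
          cumBW_mono (hB (ℓ i)) (by omega)
        have hb := le_trans (hkey i hi) (min_le_right _ _)
        rw [gg_eq_Y (le_of_lt hY) (le_trans hb h2), gg_eq_Y (le_of_lt hY) (le_trans hb h1)]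
        ring
    · -- per-slot
      intro u j hj
      set F := S.filter (fun i => ℓ i = u) with hF
      have hℓu : ∀ i ∈ F, ℓ i = u := fun i hi => (Finset.mem_filter.mp hi).2
      have hrinj : Set.InjOn r F := by
        intro a ha b hb hab
        by_contra hne
        wlog hlt : a < b generalizing a b
        · exact this hb ha hab.symm (Ne.symm hne) (by omega)
        have haF : a ∈ F := ha
        have hbF : b ∈ F := hb
        have haS : a ∈ S := (Finset.mem_filter.mp haF).1
        have hlab : ℓ a = ℓ b := (hℓu a haF).trans (hℓu b hbF).symm
        have hsubset : S.filter (fun k => k < a ∧ ℓ k = ℓ a) ⊆ S.filter (fun k => k < b ∧ ℓ k = ℓ b) := by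
          intro k hk
          simp only [Finset.mem_filter] at hk ⊢
          exact ⟨hk.1, by omega, hk.2.2.trans hlab⟩
        have hsub : S.filter (fun k => k < a ∧ ℓ k = ℓ a) ⊂ S.filter (fun k => k < b ∧ ℓ k = ℓ b) := by
          rw [Finset.ssubset_iff_of_subset hsubset]
          refine ⟨a, ?_, ?_⟩
          · simp only [Finset.mem_filter]
            exact ⟨haS, hlt, hlab⟩
          · simp only [Finset.mem_filter]
            rintro ⟨-, hlt2, -⟩; omega
        have := Finset.card_lt_card hsub
        simp only [hr] at hab
        omega
      have hsum_eq : ∑ i ∈ F, z i j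
          = ∑ q ∈ F.image r, (gg Y q (cumBW (B u) j) - gg Y q (cumBW (B u) (j-1))) := by
        rw [Finset.sum_image (fun a ha b hb => hrinj ha hb)]
        apply Finset.sum_congr rfl
        intro i hi
        simp only [hz, hℓu i hi]
      rw [hsum_eq]
      obtain ⟨N, hN⟩ := Finset.exists_nat_subset_range (F.image r)
      have hterm_nonneg : ∀ q ∈ Finset.range N, 0 ≤ gg Y q (cumBW (B u) j) - gg Y q (cumBW (B u) (j-1)) := by
        intro q _
        have := gg_mono (le_of_lt hY) q (cumBW_mono (hB u) (Nat.sub_le j 1))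
        linarith
      refine le_trans (Finset.sum_le_sum_of_subset_of_nonneg hN
        (fun q hq _ => hterm_nonneg q hq)) ?_
      rw [Finset.sum_sub_distrib]
      rw [sum_gg N (cumBW_nonneg (hB u) j), sum_gg N (cumBW_nonneg (hB u) (j-1))]
      have hmono := cumBW_mono (hB u) (Nat.sub_le j 1)
      have := min_sub_min_le (a := cumBW (B u) j) (b := cumBW (B u) (j-1)) (c := (N:ℝ)*Y) hmono
      have hstep := cumBW_succ (B u) j hj
      linarith
    · -- capacity
      intro u
      set F := S.filter (fun i => ℓ i = u) with hF
      have hfull' : ∀ i ∈ F, ∑ j ∈ Finset.Icc 1 (d i), z i j = Y := by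
        intro i hi
        have hiS : i ∈ S := (Finset.mem_filter.mp hi).1
        simp only [hz]
        rw [telescope_Icc, cumBW_zero, gg_zero (le_of_lt hY),
          gg_eq_Y (le_of_lt hY) (le_trans (hkey i hiS) (min_le_right _ _))]
        ring
      rw [Finset.sum_congr rfl hfull']
      rw [Finset.sum_const, nsmul_eq_mul]
      have hcard : F ⊆ S.filter (fun k => k ≤ C ∧ ℓ k = u) := by
        intro k hk
        simp only [hF, Finset.mem_filter] at hk ⊢
        exact ⟨hk.1, (Finset.mem_Icc.mp (hS hk.1)).2, hk.2⟩
      have h1 : F.card ≤ nf u C := le_trans (Finset.card_le_card hcard) (hinv C u)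
      have h2 : (nf u C : ℝ) * Y ≤ min (η u) (cumBW (B u) (d C)) := by
        have h4 : ((nf u C : ℕ) : ℝ) ≤ min (η u) (cumBW (B u) (d C)) / Y :=
          Nat.floor_le (div_nonneg (hmin_nonneg u C) hY.le)
        rw [le_div_iff₀ hY] at h4
        exact h4
      have h3 : (F.card : ℝ) ≤ (nf u C : ℝ) := Nat.cast_le.mpr h1
      calc (F.card : ℝ) * Y ≤ (nf u C : ℝ) * Y := by nlinarith
        _ ≤ min (η u) (cumBW (B u) (d C)) := h2
        _ ≤ η u := min_le_left _ _
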